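/- arXiv:2005.03287 — 2 statements merged into one kernel-verified Lean document; each statement's English description precedes it below -/
import Mathlib

section
/- Let A, B ∈ ℝ^{n×n} with A + B nonsingular. Then the generalized absolute value equation Ax + B|x| = b has a unique solution for every b ∈ ℝ^n if and only if the matrix (A+B)^{-1}(A−B) is a P-matrix. -/
open Matrix

/-- A square real matrix is a `P`-matrix if all of its principal minors are positive. -/
def IsPMatrix {n : ℕ} (M : Matrix (Fin n) (Fin n) ℝ) : Prop :=
  ∀ s : Finset (Fin n), s.Nonempty →
    0 < (M.submatrix (fun i : s => (i : Fin n)) (fun i : s => (i : Fin n))).det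

/-- The (unordered) singular values of a real square matrix: square roots of the
eigenvalues of `Aᵀ * A`. -/
noncomputable def singVals {n : ℕ} (A : Matrix (Fin n) (Fin n) ℝ) : Fin n → ℝ :=
  fun i => Real.sqrt ((Matrix.isHermitian_conjTranspose_mul_self A).eigenvalues i)

/-- `svalsDecr A i` is the `i`-th largest singular value of `A` (so `svalsDecr A 0 = σ₁`). -/
noncomputable def svalsDecr {n : ℕ} (A : Matrix (Fin n) (Fin n) ℝ) : Fin n → ℝ :=
  fun i => singVals A (Tuple.sort (singVals A) (Fin.rev i))

/-- The maximal singular value `σ₁`. -/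
noncomputable def maxSV {n : ℕ} (A : Matrix (Fin n) (Fin n) ℝ) : ℝ :=
  ⨆ i, singVals A i

/-- The minimal singular value `σₙ`. -/
noncomputable def minSV {n : ℕ} (A : Matrix (Fin n) (Fin n) ℝ) : ℝ :=
  ⨅ i, singVals A i

/-- The spectral radius of a real square matrix (as the spectral radius of its
complexification), valued in `ℝ≥0∞`. -/
noncomputable def specRad {n : ℕ} (A : Matrix (Fin n) (Fin n) ℝ) : ENNReal :=
  spectralRadius ℂ (A.map (Complex.ofReal))

/-!
Write `M = (A + B)⁻¹ (A - B)`. Since `x = x⁺ - x⁻` and `|x| = x⁺ + x⁻`, we have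
`A x + B |x| = (A + B) (x⁺ - M x⁻)`, so the equation is uniquely solvable for every `b` iff
`x ↦ x⁺ - M x⁻` is bijective, i.e. iff every linear complementarity problem `LCP(M, q)` has exactly
one solution.

Injectivity of this map is equivalent to `M` reversing the sign of no nonzero vector, and that is
equivalent to `M` being a P-matrix: one way by expanding `det (diag a * M + diag b)` in principal
minors, the other by deforming a principal submatrix to the identity without its determinant
vanishing. Injectivity already gives surjectivity, by induction on `n`. The map is continuous and
positively homogeneous, so injectivity makes it proper, and the solution map of the leading
principal submatrix is continuous. The last coordinate is then fixed by the intermediate value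
theorem along a homotopy that scales the right-hand side from `q` to `0`.
-/

open Finset Function Filter

theorem posPart_sub_posPart_of_mul_nonpos {a b : ℝ} (h : a * b ≤ 0) :
    (a⁺ - b⁺)⁺ = a⁺ ∧ (a⁺ - b⁺)⁻ = b⁺ := by
  rcases le_total a 0 with ha | ha <;> rcases le_total b 0 with hb | hb
  · simp [ha, hb]
  · simp [ha, hb]
  · simp [ha, hb]
  · rcases mul_eq_zero.1 (le_antisymm h (mul_nonneg ha hb)) with rfl | rfl <;> simp [*]

theorem negPart_sub_negPart_of_mul_nonpos {a b : ℝ} (h : a * b ≤ 0) :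
    (a⁻ - b⁻)⁺ = a⁻ ∧ (a⁻ - b⁻)⁻ = b⁻ := by
  simpa using posPart_sub_posPart_of_mul_nonpos (a := -a) (b := -b) (by simpa using h)

theorem negPart_sub_mul_posPart_sub_nonpos (a b : ℝ) : (a⁻ - b⁻) * (a⁺ - b⁺) ≤ 0 := by
  rcases le_total a 0 with ha | ha <;> rcases le_total b 0 with hb | hb <;> simp [ha, hb] <;>
    nlinarith

theorem exists_pos_mul_norm_le_norm {E F : Type*} [NormedAddCommGroup E] [NormedSpace ℝ E]
    [ProperSpace E] [NormedAddCommGroup F] [NormedSpace ℝ F] {f : E → F} (hf : Continuous f)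
    (hsmul : ∀ c : ℝ, 0 ≤ c → ∀ x, f (c • x) = c • f x) (hzero : ∀ x, f x = 0 → x = 0) :
    ∃ ε > 0, ∀ x, ε * ‖x‖ ≤ ‖f x‖ := by
  rcases subsingleton_or_nontrivial E with hE | hE
  · exact ⟨1, one_pos, fun x => by simp [Subsingleton.elim x 0]⟩
  obtain ⟨y, hy, hmin⟩ := (isCompact_sphere (0 : E) 1).exists_isMinOn
    (NormedSpace.sphere_nonempty.2 zero_le_one) (continuous_norm.comp hf).continuousOn
  have hy0 : y ≠ 0 := ne_zero_of_mem_unit_sphere ⟨y, hy⟩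
  refine ⟨‖f y‖, norm_pos_iff.2 fun h => hy0 (hzero y h), fun x => ?_⟩
  rcases eq_or_ne x 0 with rfl | hx
  · simp
  have hxs : ‖x‖⁻¹ • x ∈ Metric.sphere (0 : E) 1 := by
    simp [norm_smul, hx]
  have h : ‖f y‖ ≤ ‖f (‖x‖⁻¹ • x)‖ := hmin hxs
  rwa [hsmul _ (inv_nonneg.2 (norm_nonneg x)), norm_smul, norm_inv, norm_norm,
    le_inv_mul_iff₀ (norm_pos_iff.2 hx), mul_comm] at h

theorem isProperMap_of_continuous_of_smul {E F : Type*} [NormedAddCommGroup E] [NormedSpace ℝ E]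
    [ProperSpace E] [NormedAddCommGroup F] [NormedSpace ℝ F] [ProperSpace F] {f : E → F}
    (hf : Continuous f) (hsmul : ∀ c : ℝ, 0 ≤ c → ∀ x, f (c • x) = c • f x)
    (hzero : ∀ x, f x = 0 → x = 0) : IsProperMap f := by
  obtain ⟨ε, hε, hbound⟩ := exists_pos_mul_norm_le_norm hf hsmul hzero
  refine isProperMap_iff_tendsto_cocompact.2 ⟨hf, ?_⟩
  rw [← Metric.cobounded_eq_cocompact, ← Metric.cobounded_eq_cocompact,
    ← tendsto_norm_atTop_iff_cobounded]
  exact tendsto_atTop_mono hbound (tendsto_norm_cobounded_atTop.const_mul_atTop hε)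

namespace Matrix

section Det

variable {m R : Type*} [Fintype m] [DecidableEq m] [CommRing R]

theorem det_of_piecewise_single (M : Matrix m m R) (s : Finset m) :
    (of (s.piecewise (fun i => M i) fun i => Pi.single i 1)).det =
      (M.submatrix ((↑) : s → m) (↑)).det := by
  set X := of (s.piecewise (fun i => M i) fun i => Pi.single i 1)
  have hX : ∀ i j, X i j = if i ∈ s then M i j else if j = i then 1 else 0 := by
    intro i j
    by_cases hi : i ∈ s <;> simp [X, hi, Pi.single_apply]
  have hzero : ∀ i, ¬ i ∈ s → ∀ j, j ∈ s → X i j = 0 := fun i hi j hj => by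
    rw [hX, if_neg hi, if_neg (ne_of_mem_of_not_mem hj hi)]
  have hid : X.toSquareBlockProp (fun i => i ∉ s) = 1 := by
    ext i j
    simp [toSquareBlockProp, hX, i.2, one_apply, Subtype.ext_iff, eq_comm]
  have hM : X.toSquareBlockProp (· ∈ s) = M.submatrix ((↑) : s → m) (↑) := by
    ext i j
    simp [toSquareBlockProp, hX, i.2]
  rw [twoBlockTriangular_det X (· ∈ s) hzero, hid, det_one, mul_one, hM]
  -- the two sides differ only in the `Fintype` instance on `s`
  convert rfl

theorem det_diagonal_mul_add_diagonal (M : Matrix m m R) (a b : m → R) :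
    (diagonal a * M + diagonal b).det =
      ∑ s : Finset m, (∏ i ∈ s, a i) * (∏ i ∈ sᶜ, b i) * (M.submatrix ((↑) : s → m) (↑)).det := by
  have hrows : diagonal a * M + diagonal b =
      of ((fun i => a i • M i) + fun i => b i • Pi.single i 1) := by
    ext i j
    by_cases h : i = j <;> simp [h, eq_comm]
  have hsmul : ∀ s : Finset m,
      s.piecewise (fun i => a i • M i) (fun i => b i • Pi.single i 1) =
        fun i => s.piecewise a b i • s.piecewise (fun i => M i) (fun i => Pi.single i 1) i := by
    intro s
    ext i : 1
    by_cases hi : i ∈ s <;> simp [hi]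
  have hadd := (detRowAlternating (n := m) (R := R)).toMultilinearMap.map_add_univ
    (fun i => a i • M i) (fun i => b i • Pi.single i 1)
  rw [AlternatingMap.coe_multilinearMap] at hadd
  rw [hrows]
  refine hadd.trans (sum_congr rfl fun s _ => ?_)
  rw [hsmul, AlternatingMap.map_smul_univ, prod_piecewise, univ_inter, ← compl_eq_univ_sdiff,
    smul_eq_mul, ← det_of_piecewise_single M s]
  rfl

end Det

variable {m : Type*} [Fintype m]

def NoSignReversal (M : Matrix m m ℝ) : Prop :=
  ∀ x : m → ℝ, x ≠ 0 → ∃ i, 0 < x i * (M *ᵥ x) i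

theorem NoSignReversal.submatrix {m' : Type*} [Fintype m'] {M : Matrix m m ℝ}
    (hM : M.NoSignReversal) {f : m' → m} (hf : Injective f) :
    (M.submatrix f f).NoSignReversal := by
  intro x hx
  set y : m → ℝ := extend f x 0
  have hy : ∀ i, y (f i) = x i := hf.extend_apply x 0
  have hMy : ∀ i, (M *ᵥ y) (f i) = (M.submatrix f f *ᵥ x) i := by
    intro i
    refine (Fintype.sum_of_injective f hf _ _ (fun j hj => ?_) fun k => ?_).symm
    · simp [y, extend_apply' _ _ _ (by simpa using hj)]
    · simp [hy]
  obtain ⟨j, hj⟩ := hM y fun h => hx (funext fun i => by simpa [hy] using congrFun h (f i))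
  obtain ⟨i, rfl⟩ : ∃ i, f i = j := by
    by_contra h
    simp [y, extend_apply' _ _ _ h] at hj
  exact ⟨i, by rwa [hy, hMy] at hj⟩

theorem NoSignReversal.det_pos [DecidableEq m] {M : Matrix m m ℝ} (hM : M.NoSignReversal) :
    0 < M.det := by
  set path : ℝ → Matrix m m ℝ := fun t => t • M + (1 - t) • (1 : Matrix m m ℝ)
  have hpath : ∀ t ∈ Set.Icc (0 : ℝ) 1, (path t).det ≠ 0 := by
    rintro t ⟨ht0, ht1⟩ hdet
    obtain ⟨v, hv, hker⟩ := exists_mulVec_eq_zero_iff.mpr hdet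
    obtain ⟨i, hi⟩ := hM v hv
    have hvi : t * (M *ᵥ v) i + (1 - t) * v i = 0 := by
      simpa [path, add_mulVec, smul_mulVec] using congrFun hker i
    rcases ht0.eq_or_lt with rfl | ht0
    · simp_all
    · have h : t * (v i * (M *ᵥ v) i) + (1 - t) * v i ^ 2 = 0 := by
        linear_combination v i * hvi
      linarith [mul_pos ht0 hi, mul_nonneg (sub_nonneg.2 ht1) (sq_nonneg (v i))]
  have hcont : Continuous fun t => (path t).det := by
    fun_prop
  by_contra! hneg
  obtain ⟨t, ht, hzero⟩ := intermediate_value_Icc' zero_le_one hcont.continuousOn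
    (show (0 : ℝ) ∈ Set.Icc (path 1).det (path 0).det by simp [path, hneg])
  exact hpath t ht hzero

theorem det_diagonal_mul_add_diagonal_pos [DecidableEq m] {M : Matrix m m ℝ}
    (hM : ∀ s : Finset m, 0 < (M.submatrix ((↑) : s → m) (↑)).det) {a b : m → ℝ}
    (ha : 0 ≤ a) (hb : 0 ≤ b) (hab : ∀ i, 0 < a i + b i) :
    0 < (diagonal a * M + diagonal b).det := by
  rw [det_diagonal_mul_add_diagonal]
  refine sum_pos' (fun s _ => ?_) ⟨univ.filter (0 < a ·), mem_univ _, ?_⟩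
  · exact mul_nonneg (mul_nonneg (prod_nonneg fun i _ => ha i) (prod_nonneg fun i _ => hb i))
      (hM s).le
  · refine mul_pos (mul_pos (prod_pos fun i hi => (mem_filter.1 hi).2)
      (prod_pos fun i hi => ?_)) (hM _)
    have : a i ≤ 0 := by simpa using hi
    linarith [hab i]

/-- `M.complementarityMap x = q` says that `z = x⁻`, `w = x⁺` solve `LCP(M, q)`:
`w = M z + q`, `z, w ≥ 0`, `zᵢ wᵢ = 0`. -/
def complementarityMap (M : Matrix m m ℝ) (x : m → ℝ) : m → ℝ := x⁺ - M *ᵥ x⁻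

theorem continuous_complementarityMap (M : Matrix m m ℝ) : Continuous M.complementarityMap := by
  have hpos : Continuous fun x : m → ℝ => x⁺ :=
    continuous_pi fun i => by simp only [Pi.posPart_apply]; fun_prop
  have hneg : Continuous fun x : m → ℝ => x⁻ :=
    continuous_pi fun i => by simp only [Pi.negPart_apply]; fun_prop
  exact hpos.sub (M.mulVecLin.continuous_of_finiteDimensional.comp hneg)

theorem complementarityMap_smul (M : Matrix m m ℝ) {c : ℝ} (hc : 0 ≤ c) (x : m → ℝ) :
    M.complementarityMap (c • x) = c • M.complementarityMap x := by
  have hpos : (c • x)⁺ = c • x⁺ := by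
    ext i; simp [posPart, mul_max_of_nonneg _ _ hc]
  have hneg : (c • x)⁻ = c • x⁻ := by
    ext i; simp [negPart, mul_max_of_nonneg _ _ hc]
  rw [complementarityMap, complementarityMap, hpos, hneg, mulVec_smul, smul_sub]

theorem negPart_mul_mulVec_negPart (M : Matrix m m ℝ) (x : m → ℝ) (i : m) :
    x⁻ i * (M *ᵥ x⁻) i = -(x⁻ i * M.complementarityMap x i) := by
  have : (x i)⁻ * (x i)⁺ = 0 := by
    rcases le_total (x i) 0 with h | h <;> simp [h]
  simp only [complementarityMap, Pi.sub_apply, Pi.negPart_apply, Pi.posPart_apply] at *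
  linear_combination this

theorem NoSignReversal.exists_negPart_mul_complementarityMap_neg {M : Matrix m m ℝ}
    (hM : M.NoSignReversal) {x : m → ℝ} (hx : x⁻ ≠ 0) :
    ∃ i, x⁻ i * M.complementarityMap x i < 0 := by
  obtain ⟨i, hi⟩ := hM _ hx
  exact ⟨i, by linarith [negPart_mul_mulVec_negPart M x i]⟩

theorem NoSignReversal.injective_complementarityMap {M : Matrix m m ℝ} (hM : M.NoSignReversal) :
    Injective M.complementarityMap := by
  intro x y hxy
  set u := x⁻ - y⁻
  have hMu : M *ᵥ u = x⁺ - y⁺ := by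
    rw [complementarityMap, complementarityMap] at hxy
    rw [mulVec_sub]
    linear_combination -hxy
  have hu : u = 0 := by
    by_contra hu
    obtain ⟨i, hi⟩ := hM u hu
    rw [hMu] at hi
    exact hi.not_ge (negPart_sub_mul_posPart_sub_nonpos (x i) (y i))
  rw [hu, mulVec_zero, eq_comm, sub_eq_zero] at hMu
  rw [← posPart_sub_negPart x, ← posPart_sub_negPart y, hMu, sub_eq_zero.1 hu]

theorem NoSignReversal.of_injective_complementarityMap {M : Matrix m m ℝ}
    (hinj : Injective M.complementarityMap) : M.NoSignReversal := by
  intro u hu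
  by_contra! h
  set v := M *ᵥ u
  -- `v⁺ - u⁺` and `v⁻ - u⁻` encode the two solutions `u⁺` and `u⁻` of `LCP(M, v⁺ - M u⁺)`.
  have hx : (v⁺ - u⁺)⁺ = v⁺ ∧ (v⁺ - u⁺)⁻ = u⁺ := by
    simp only [funext_iff, ← forall_and]
    exact fun i => posPart_sub_posPart_of_mul_nonpos (by linarith [h i, mul_comm (u i) (v i)])
  have hy : (v⁻ - u⁻)⁺ = v⁻ ∧ (v⁻ - u⁻)⁻ = u⁻ := by
    simp only [funext_iff, ← forall_and]
    exact fun i => negPart_sub_negPart_of_mul_nonpos (by linarith [h i, mul_comm (u i) (v i)])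
  have hvu : v⁺ - u⁺ = v⁻ - u⁻ := hinj <| by
    rw [complementarityMap, complementarityMap, hx.1, hx.2, hy.1, hy.2, sub_eq_sub_iff_sub_eq_sub,
      ← mulVec_sub, posPart_sub_negPart, posPart_sub_negPart]
  have hvu' : v = u := by
    rw [← posPart_sub_negPart v, ← posPart_sub_negPart u]
    linear_combination hvu
  refine hu (funext fun i => mul_self_eq_zero.1 (le_antisymm ?_ (mul_self_nonneg _)))
  simpa [hvu'] using h i

theorem NoSignReversal.exists_continuous_rightInverse {M : Matrix m m ℝ} (hM : M.NoSignReversal)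
    (hsurj : Surjective M.complementarityMap) :
    ∃ g, Continuous g ∧ RightInverse g M.complementarityMap := by
  have hinj := hM.injective_complementarityMap
  have hproper : IsProperMap M.complementarityMap :=
    isProperMap_of_continuous_of_smul M.continuous_complementarityMap
      (fun c hc x => M.complementarityMap_smul hc x)
      (fun x hx => hinj (hx.trans (by simp [complementarityMap])))
  let e := (Equiv.ofBijective _ ⟨hinj, hsurj⟩).toHomeomorphOfContinuousClosed
    M.continuous_complementarityMap hproper.isClosedMap
  exact ⟨e.symm, e.symm.continuous, e.apply_symm_apply⟩

theorem complementarityMap_snoc_castSucc {n : ℕ} (M : Matrix (Fin (n + 1)) (Fin (n + 1)) ℝ)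
    (y : Fin n → ℝ) (t : ℝ) (i : Fin n) :
    M.complementarityMap (Fin.snoc y t) i.castSucc =
      (M.submatrix Fin.castSucc Fin.castSucc).complementarityMap y i -
        M i.castSucc (Fin.last n) * t⁻ := by
  simp [complementarityMap, mulVec, dotProduct, Fin.sum_univ_castSucc]
  ring

theorem complementarityMap_snoc_last {n : ℕ} (M : Matrix (Fin (n + 1)) (Fin (n + 1)) ℝ)
    (y : Fin n → ℝ) (t : ℝ) :
    M.complementarityMap (Fin.snoc y t) (Fin.last n) =
      t⁺ - ∑ j, M (Fin.last n) j.castSucc * (y j)⁻ - M (Fin.last n) (Fin.last n) * t⁻ := by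
  simp [complementarityMap, mulVec, dotProduct, Fin.sum_univ_castSucc]
  ring

theorem NoSignReversal.surjective_complementarityMap_of_submatrix {n : ℕ}
    {M : Matrix (Fin (n + 1)) (Fin (n + 1)) ℝ} (hM : M.NoSignReversal)
    (hsurj : Surjective (M.submatrix Fin.castSucc Fin.castSucc).complementarityMap) :
    Surjective M.complementarityMap := by
  obtain ⟨g, hg, hgM⟩ :=
    (hM.submatrix (Fin.castSucc_injective n)).exists_continuous_rightInverse hsurj
  intro q
  -- `X s` solves the first `n` equations of `M.complementarityMap x = (1 - s) • q`; the residual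
  -- `φ s` of the last one is negative at `s = 1` because `M` reverses no sign.
  set c : Fin n → ℝ := fun i => M i.castSucc (Fin.last n)
  set X : ℝ → Fin (n + 1) → ℝ := fun s => Fin.snoc (g ((1 - s) • Fin.init q + s • c)) (-s)
  have hX : ∀ s, 0 ≤ s → ∀ i : Fin n,
      M.complementarityMap (X s) i.castSucc = (1 - s) * q i.castSucc := by
    intro s hs i
    simp [X, complementarityMap_snoc_castSucc, hgM _, hs, c, Fin.init]
    ring
  set φ : ℝ → ℝ := fun s => M.complementarityMap (X s) (Fin.last n) - (1 - s) * q (Fin.last n)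
  have hφ : Continuous φ := by
    simp only [φ, X, complementarityMap_snoc_last]
    fun_prop
  have hφ1 : φ 1 < 0 := by
    have hX1 : (X 1)⁻ (Fin.last n) = 1 := by simp [X]
    obtain ⟨i, hi⟩ := hM.exists_negPart_mul_complementarityMap_neg
      (x := X 1) fun h => one_ne_zero (hX1.symm.trans (congrFun h _))
    induction i using Fin.lastCases with
    | last => simpa [φ, hX1] using hi
    | cast i => simp [hX 1 zero_le_one i] at hi
  rcases le_or_gt (φ 0) 0 with h0 | h0
  · have hφ0 : φ 0 = -∑ j, M (Fin.last n) j.castSucc * (g (Fin.init q) j)⁻ - q (Fin.last n) := by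
      simp [φ, X, complementarityMap_snoc_last]
    refine ⟨Fin.snoc (g (Fin.init q)) (-φ 0), funext fun i => ?_⟩
    induction i using Fin.lastCases with
    | last =>
      rw [complementarityMap_snoc_last, posPart_eq_self.2 (neg_nonneg.2 h0),
        negPart_eq_zero.2 (neg_nonneg.2 h0), hφ0]
      ring
    | cast i =>
      simp [complementarityMap_snoc_castSucc, hgM _, negPart_eq_zero.2 (neg_nonneg.2 h0), Fin.init]
  · obtain ⟨s, ⟨hs0, hs1⟩, hφs⟩ :=
      intermediate_value_Icc' zero_le_one hφ.continuousOn ⟨hφ1.le, h0.le⟩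
    have hs1' : s < 1 := hs1.lt_of_ne (by rintro rfl; linarith)
    have hXs : M.complementarityMap (X s) = (1 - s) • q := by
      ext i
      induction i using Fin.lastCases with
      | last => simp only [φ] at hφs; simp; linarith
      | cast i => simp [hX s hs0 i]
    refine ⟨(1 - s)⁻¹ • X s, ?_⟩
    rw [complementarityMap_smul _ (inv_nonneg.2 (sub_nonneg.2 hs1)), hXs, smul_smul,
      inv_mul_cancel₀ (sub_ne_zero.2 hs1'.ne'), one_smul]

theorem NoSignReversal.surjective_complementarityMap {n : ℕ} {M : Matrix (Fin n) (Fin n) ℝ}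
    (hM : M.NoSignReversal) : Surjective M.complementarityMap := by
  induction n with
  | zero => exact fun q => ⟨0, Subsingleton.elim _ _⟩
  | succ n ih =>
    exact hM.surjective_complementarityMap_of_submatrix
      (ih (hM.submatrix (Fin.castSucc_injective n)))

theorem NoSignReversal.isPMatrix {n : ℕ} {M : Matrix (Fin n) (Fin n) ℝ}
    (hM : M.NoSignReversal) : IsPMatrix M :=
  fun _ _ => (hM.submatrix Subtype.val_injective).det_pos

theorem mulVec_add_mulVec_abs {A B : Matrix m m ℝ} [DecidableEq m] (hAB : IsUnit (A + B))
    (x : m → ℝ) :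
    A *ᵥ x + B *ᵥ |x| = (A + B) *ᵥ ((A + B)⁻¹ * (A - B)).complementarityMap x := by
  have hS : (A + B) * ((A + B)⁻¹ * (A - B)) = A - B := by
    rw [← Matrix.mul_assoc, mul_nonsing_inv _ ((isUnit_iff_isUnit_det _).1 hAB), Matrix.one_mul]
  rw [complementarityMap, mulVec_sub, mulVec_mulVec, hS, ← posPart_add_negPart x]
  nth_rewrite 1 [← posPart_sub_negPart x]
  simp only [mulVec_add, mulVec_sub, add_mulVec, sub_mulVec]
  abel

theorem existsUnique_mulVec_add_mulVec_abs_iff {A B : Matrix m m ℝ} [DecidableEq m]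
    (hAB : IsUnit (A + B)) :
    (∀ b : m → ℝ, ∃! x : m → ℝ, A *ᵥ x + B *ᵥ |x| = b) ↔
      Bijective ((A + B)⁻¹ * (A - B)).complementarityMap := by
  simp only [mulVec_add_mulVec_abs hAB, ← bijective_iff_existsUnique]
  exact Bijective.of_comp_iff' ⟨mulVec_injective_iff_isUnit.2 hAB,
    mulVec_surjective_iff_isUnit.2 hAB⟩ _

end Matrix

theorem IsPMatrix.det_submatrix_pos {n : ℕ} {M : Matrix (Fin n) (Fin n) ℝ} (hM : IsPMatrix M)
    (s : Finset (Fin n)) : 0 < (M.submatrix ((↑) : s → Fin n) (↑)).det := by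
  rcases s.eq_empty_or_nonempty with rfl | hs
  · simp
  · exact hM s hs

theorem IsPMatrix.noSignReversal {n : ℕ} {M : Matrix (Fin n) (Fin n) ℝ} (hM : IsPMatrix M) :
    M.NoSignReversal := by
  intro x hx
  by_contra! hle
  -- `a, b ≥ 0` are never both zero and `aᵢ (M x)ᵢ + bᵢ xᵢ = 0`
  set a : Fin n → ℝ := fun i => x i ^ 2
  set b : Fin n → ℝ := fun i => if x i = 0 then 1 else -(x i * (M *ᵥ x) i)
  have hker : (diagonal a * M + diagonal b) *ᵥ x = 0 := by
    ext i
    by_cases hi : x i = 0 <;> simp [a, b, add_mulVec, ← mulVec_mulVec, mulVec_diagonal, hi]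
    ring
  refine (det_diagonal_mul_add_diagonal_pos hM.det_submatrix_pos (a := a) (b := b)
    (fun i => sq_nonneg _) (fun i => ?_) (fun i => ?_)).ne'
    (exists_mulVec_eq_zero_iff.mp ⟨x, hx, hker⟩)
  · by_cases hi : x i = 0 <;> simp [b, hi, hle i]
  · by_cases hi : x i = 0
    · simp [a, b, hi]
    · simp only [a, b, if_neg hi]
      exact lt_add_of_pos_of_le (by positivity) (neg_nonneg.2 (hle i))

theorem bijective_complementarityMap_iff_isPMatrix {n : ℕ} {M : Matrix (Fin n) (Fin n) ℝ} :
    Bijective M.complementarityMap ↔ IsPMatrix M :=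
  ⟨fun h => (NoSignReversal.of_injective_complementarityMap h.1).isPMatrix, fun h =>
    ⟨h.noSignReversal.injective_complementarityMap, h.noSignReversal.surjective_complementarityMap⟩⟩

theorem stmt4 {n : ℕ} (A B : Matrix (Fin n) (Fin n) ℝ) (hAB : IsUnit (A + B)) :
    (∀ b : Fin n → ℝ, ∃! x : Fin n → ℝ, A *ᵥ x + B *ᵥ |x| = b) ↔
      IsPMatrix ((A + B)⁻¹ * (A - B)) := by
  rw [existsUnique_mulVec_add_mulVec_abs_iff hAB, bijective_complementarityMap_iff_isPMatrix]
end

section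
/- Let A, B ∈ ℝ^{n×n}. The GAVE Ax + B|x| = b has a unique solution for every b ∈ ℝ^n if and only if the matrix A + B·D̄ is nonsingular for every diagonal matrix D̄ = diag(d̄_i) with d̄_i ∈ [−1, 1]. -/
/-!
Necessity: if `(A + B D) z = 0` with `z ≠ 0`, choose `y` with `|y + z| - |y| = D z` coordinatewise;
then `y` and `y + z` have the same right-hand side.

Sufficiency: `|u| - |v| = D (u - v)` for a diagonal `D` with entries in `[-1, 1]`, so the map
`x ↦ A x + B |x|` takes values differing by `(A + B D) (u - v)` at `u` and `v`; this gives
injectivity. Surjectivity is proved by induction on the set `S` of coordinates carrying an absolute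
value. To add a coordinate `j`, replace `A` by `A + t B eⱼ eⱼᵀ` with `t ∈ [-1, 1]`. The smaller
equation has a unique solution `x(t)`, which is continuous in `t` because compactness of the set of
admissible `D` gives a uniform antilipschitz bound. The intermediate value theorem then yields a `t`
with `t xⱼ(t) = |xⱼ(t)|`, and for it `x(t)` solves the larger equation.
-/

open Matrix

open Set

theorem exists_abs_sub_abs_eq_mul_sub (x y : ℝ) :
    ∃ d ∈ Icc (-1 : ℝ) 1, |x| - |y| = d * (x - y) := by
  rcases eq_or_ne x y with rfl | hxy
  · exact ⟨0, by norm_num, by simp⟩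
  · have hne : x - y ≠ 0 := sub_ne_zero.mpr hxy
    refine ⟨(|x| - |y|) / (x - y), abs_le.mp ?_, (div_mul_cancel₀ _ hne).symm⟩
    rw [abs_div, div_le_one (abs_pos.mpr hne)]
    exact abs_abs_sub_abs_le_abs_sub x y

theorem exists_abs_add_sub_abs_eq_mul {d : ℝ} (hd : d ∈ Icc (-1 : ℝ) 1) (z : ℝ) :
    ∃ y, |y + z| - |y| = d * z := by
  obtain ⟨hd₁, hd₂⟩ := hd
  refine ⟨(d * |z| - z) / 2, ?_⟩
  rcases le_total 0 z with hz | hz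
  · rw [abs_of_nonneg hz, abs_of_nonneg (by nlinarith), abs_of_nonpos (by nlinarith)]
    ring
  · rw [abs_of_nonpos hz, abs_of_nonpos (by nlinarith), abs_of_nonneg (by nlinarith)]
    ring

theorem exists_mul_eq_abs_of_continuous {ψ : Icc (-1 : ℝ) 1 → ℝ} (hψ : Continuous ψ) :
    ∃ t : Icc (-1 : ℝ) 1, t * ψ t = |ψ t| := by
  have := Subtype.preconnectedSpace (isPreconnected_Icc (a := (-1 : ℝ)) (b := 1))
  let one : Icc (-1 : ℝ) 1 := ⟨1, by norm_num, le_rfl⟩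
  let negOne : Icc (-1 : ℝ) 1 := ⟨-1, le_rfl, by norm_num⟩
  by_cases h₁ : 0 ≤ ψ one
  · exact ⟨one, by simp [one, abs_of_nonneg h₁]⟩
  by_cases h₂ : ψ negOne ≤ 0
  · exact ⟨negOne, by simp [negOne, abs_of_nonpos h₂]⟩
  obtain ⟨t, ht⟩ :=
    intermediate_value_univ one negOne hψ ⟨(not_le.mp h₁).le, (not_le.mp h₂).le⟩
  exact ⟨t, by simp [ht]⟩

theorem continuous_of_antilipschitzWith_of_eq {T X Y : Type*} [TopologicalSpace T]
    [PseudoMetricSpace X] [PseudoMetricSpace Y] {G : T → X → Y} (hG : ∀ u, Continuous (G · u))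
    {K : NNReal} (hK : ∀ t, AntilipschitzWith K (G t)) {x : T → X} {b : Y}
    (hx : ∀ t, G t (x t) = b) : Continuous x := by
  refine continuous_iff_continuousAt.mpr fun s => tendsto_iff_dist_tendsto_zero.mpr ?_
  have hlim : Filter.Tendsto (fun t => K * dist (G t (x s)) (G s (x s))) (nhds s) (nhds 0) := by
    simpa using
      ((hG (x s)).dist (continuous_const (y := G s (x s)))).const_mul (K : ℝ) |>.tendsto s
  refine squeeze_zero (fun _ => dist_nonneg) (fun t => ?_) hlim
  calc dist (x t) (x s) ≤ K * dist (G t (x t)) (G t (x s)) := (hK t).le_mul_dist _ _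
    _ = K * dist (G t (x s)) (G s (x s)) := by rw [hx, hx, dist_comm]

variable {ι : Type*}

section Cube

variable [DecidableEq ι]

def cubeOn (S : Finset ι) : Set (ι → ℝ) :=
  univ.pi fun i => if i ∈ S then Icc (-1) 1 else {0}

theorem isCompact_cubeOn (S : Finset ι) : IsCompact (cubeOn S) :=
  isCompact_univ_pi fun i => by split_ifs; exacts [isCompact_Icc, isCompact_singleton]

theorem zero_mem_cubeOn (S : Finset ι) : (0 : ι → ℝ) ∈ cubeOn S := fun i _ => by
  by_cases hi : i ∈ S <;> simp [hi]

theorem mem_cubeOn_univ [Fintype ι] {d : ι → ℝ} :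
    d ∈ cubeOn (Finset.univ : Finset ι) ↔ ∀ i, d i ∈ Icc (-1 : ℝ) 1 := by
  simp only [cubeOn, Finset.mem_univ, if_true, mem_univ_pi]

theorem mem_Icc_of_mem_cubeOn {S : Finset ι} {d : ι → ℝ} (hd : d ∈ cubeOn S) (i : ι) :
    d i ∈ Icc (-1 : ℝ) 1 := by
  have hdi := hd i (mem_univ i)
  by_cases hi : i ∈ S <;> simp_all

theorem indicator_mem_cubeOn (S : Finset ι) {d : ι → ℝ} (hd : ∀ i, d i ∈ Icc (-1 : ℝ) 1) :
    (S : Set ι).indicator d ∈ cubeOn S := fun i _ => by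
  by_cases hi : i ∈ S <;> simp [hi, hd i]

theorem single_add_mem_cubeOn {S : Finset ι} {j : ι} (hj : j ∉ S) {t : ℝ}
    (ht : t ∈ Icc (-1 : ℝ) 1) {d : ι → ℝ} (hd : d ∈ cubeOn S) :
    Pi.single j t + d ∈ cubeOn (insert j S) := fun i _ => by
  have hdi := hd i (mem_univ i)
  rcases eq_or_ne i j with rfl | hij
  · simp_all
  · by_cases hi : i ∈ S <;> simp_all

end Cube

variable [Fintype ι]

noncomputable def gaveMap (A B : Matrix ι ι ℝ) (S : Finset ι) (x : ι → ℝ) : ι → ℝ :=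
  A *ᵥ x + B *ᵥ (S : Set ι).indicator |x|

theorem gaveMap_empty (A B : Matrix ι ι ℝ) : gaveMap A B ∅ = (A *ᵥ ·) := by
  ext1 x
  rw [gaveMap, Finset.coe_empty, indicator_empty', mulVec_zero, add_zero]

theorem gaveMap_univ (A B : Matrix ι ι ℝ) :
    gaveMap A B Finset.univ = fun x => A *ᵥ x + B *ᵥ |x| := by
  ext1 x
  rw [gaveMap, Finset.coe_univ, indicator_univ]

variable [DecidableEq ι]

theorem IsCompact.exists_norm_le_mul_norm_mulVec {X : Type*} [TopologicalSpace X] {K : Set X}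
    (hK : IsCompact K) {M : X → Matrix ι ι ℝ} (hM : Continuous M)
    (hunit : ∀ x ∈ K, IsUnit (M x)) : ∃ C : NNReal, ∀ x ∈ K, ∀ v, ‖v‖ ≤ C * ‖M x *ᵥ v‖ := by
  have hcont : ContinuousOn (fun p : X × (ι → ℝ) => ‖M p.1 *ᵥ p.2‖) (K ×ˢ Metric.sphere 0 1) :=
    ((hM.comp continuous_fst).matrix_mulVec continuous_snd).norm.continuousOn
  have hpos : ∀ p ∈ K ×ˢ Metric.sphere (0 : ι → ℝ) 1, 0 < ‖M p.1 *ᵥ p.2‖ := by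
    rintro ⟨x, v⟩ ⟨hx, hv⟩
    refine norm_pos_iff.mpr fun h0 => ?_
    have hv0 : v = 0 :=
      mulVec_injective_iff_isUnit.mpr (hunit x hx) (h0.trans (mulVec_zero _).symm)
    simp [hv0] at hv
  obtain ⟨c, hc, hcle⟩ := (hK.prod (isCompact_sphere 0 1)).exists_forall_le' hcont hpos
  refine ⟨c⁻¹.toNNReal, fun x hx v => ?_⟩
  rcases eq_or_ne v 0 with rfl | hv
  · simp
  have hv' : 0 < ‖v‖ := norm_pos_iff.mpr hv
  have hle := hcle (x, ‖v‖⁻¹ • v) ⟨hx, by simp [norm_smul, hv'.ne']⟩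
  rw [mulVec_smul, norm_smul, norm_inv, norm_norm, inv_mul_eq_div, le_div_iff₀ hv'] at hle
  rw [Real.coe_toNNReal _ (by positivity), inv_mul_eq_div, le_div_iff₀ hc]
  simpa [mul_comm] using hle

theorem add_mul_diagonal_mulVec (A B : Matrix ι ι ℝ) (d v : ι → ℝ) :
    (A + B * diagonal d) *ᵥ v = A *ᵥ v + B *ᵥ (d * v) := by
  rw [add_mulVec, ← mulVec_mulVec]
  congr 2
  ext i
  exact mulVec_diagonal d v i

theorem exists_gaveMap_sub_eq (A B : Matrix ι ι ℝ) (S : Finset ι) (u v : ι → ℝ) :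
    ∃ d ∈ cubeOn S, gaveMap A B S u - gaveMap A B S v = (A + B * diagonal d) *ᵥ (u - v) := by
  choose d hd hduv using fun i => exists_abs_sub_abs_eq_mul_sub (u i) (v i)
  refine ⟨(S : Set ι).indicator d, indicator_mem_cubeOn S hd, ?_⟩
  have habs : (S : Set ι).indicator |u| - (S : Set ι).indicator |v|
      = (S : Set ι).indicator d * (u - v) := by
    ext i
    by_cases hi : i ∈ S <;> simp [hi, hduv i]
  rw [add_mul_diagonal_mulVec, ← habs, gaveMap, gaveMap, mulVec_sub, mulVec_sub]
  abel

theorem gaveMap_add_mul_diagonal_single {A B : Matrix ι ι ℝ} {S : Finset ι} {j : ι}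
    (hj : j ∉ S) {t : ℝ} {x : ι → ℝ} (hx : t * x j = |x j|) :
    gaveMap (A + B * diagonal (Pi.single j t)) B S x = gaveMap A B (insert j S) x := by
  have habs : Pi.single j t * x + (S : Set ι).indicator |x|
      = ((insert j S : Finset ι) : Set ι).indicator |x| := by
    ext i
    rcases eq_or_ne i j with rfl | hij
    · simp [hj, hx]
    · simp [hij, indicator_apply]
  rw [gaveMap, gaveMap, add_mul_diagonal_mulVec, add_assoc, ← mulVec_add, habs]

theorem antilipschitzWith_gaveMap {A B : Matrix ι ι ℝ} {S : Finset ι} {C : NNReal}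
    (hC : ∀ d ∈ cubeOn S, ∀ v, ‖v‖ ≤ C * ‖(A + B * diagonal d) *ᵥ v‖) :
    AntilipschitzWith C (gaveMap A B S) := by
  refine AntilipschitzWith.of_le_mul_dist fun u v => ?_
  obtain ⟨d, hd, huv⟩ := exists_gaveMap_sub_eq A B S u v
  rw [dist_eq_norm, dist_eq_norm, huv]
  exact hC d hd (u - v)

theorem gaveMap_injective {A B : Matrix ι ι ℝ} {S : Finset ι}
    (h : ∀ d ∈ cubeOn S, IsUnit (A + B * diagonal d)) : Function.Injective (gaveMap A B S) := by
  intro u v huv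
  obtain ⟨d, hd, hsub⟩ := exists_gaveMap_sub_eq A B S u v
  rw [huv, sub_self, ← mulVec_zero (A + B * diagonal d)] at hsub
  exact sub_eq_zero.mp (mulVec_injective_iff_isUnit.mpr (h d hd) hsub.symm)

theorem isUnit_of_gaveMap_injective {A B : Matrix ι ι ℝ} {S : Finset ι}
    (hinj : Function.Injective (gaveMap A B S)) {d : ι → ℝ} (hd : d ∈ cubeOn S) :
    IsUnit (A + B * diagonal d) := by
  refine mulVec_injective_iff_isUnit.mp fun z w hzw => ?_
  choose y hy using fun i =>
    exists_abs_add_sub_abs_eq_mul (mem_Icc_of_mem_cubeOn hd i) (z i - w i)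
  have habs :
      (S : Set ι).indicator |y + (z - w)| - (S : Set ι).indicator |y| = d * (z - w) := by
    ext i
    by_cases hi : i ∈ S
    · simp [hi, hy i]
    · simp [hi, show d i = 0 by simpa [hi] using hd i (mem_univ i)]
  have hsame : gaveMap A B S (y + (z - w)) = gaveMap A B S y := by
    rw [← sub_eq_zero]
    calc _ = (A + B * diagonal d) *ᵥ (z - w) := by
          rw [add_mul_diagonal_mulVec, ← habs, gaveMap, gaveMap, mulVec_add, mulVec_sub B]
          abel
      _ = 0 := by rw [mulVec_sub, hzw, sub_self]
  simpa [sub_eq_zero] using hinj hsame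

theorem gaveMap_surjective {A B : Matrix ι ι ℝ} {S : Finset ι}
    (h : ∀ d ∈ cubeOn S, IsUnit (A + B * diagonal d)) : Function.Surjective (gaveMap A B S) := by
  induction S using Finset.induction_on generalizing A with
  | empty =>
    rw [gaveMap_empty]
    simpa using mulVec_surjective_iff_isUnit.mpr (h 0 (zero_mem_cubeOn ∅))
  | @insert j S hj ih =>
    intro b
    obtain ⟨C, hC⟩ := (isCompact_cubeOn (insert j S)).exists_norm_le_mul_norm_mulVec
      (M := fun d => A + B * diagonal d) (by fun_prop) h
    have hA : ∀ (t : ℝ) (d : ι → ℝ), A + B * diagonal (Pi.single j t) + B * diagonal d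
        = A + B * diagonal (Pi.single j t + d) := by
      intro t d
      rw [add_assoc, ← mul_add, diagonal_add]
      rfl
    choose x hx using fun t : Icc (-1 : ℝ) 1 =>
      ih (A := A + B * diagonal (Pi.single j (t : ℝ) : ι → ℝ))
        (fun d hd => hA t d ▸ h _ (single_add_mem_cubeOn hj t.2 hd)) b
    have hcont : Continuous x :=
      continuous_of_antilipschitzWith_of_eq
        (G := fun t : Icc (-1 : ℝ) 1 => gaveMap (A + B * diagonal (Pi.single j (t : ℝ))) B S)
        (fun u => by
          have := continuous_single (A := fun _ : ι => ℝ) j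
          unfold gaveMap
          fun_prop)
        (fun t => antilipschitzWith_gaveMap fun d hd v =>
          hA t d ▸ hC _ (single_add_mem_cubeOn hj t.2 hd) v)
        hx
    obtain ⟨t, ht⟩ := exists_mul_eq_abs_of_continuous ((continuous_apply j).comp hcont)
    exact ⟨x t, (gaveMap_add_mul_diagonal_single hj ht).symm.trans (hx t)⟩

theorem gaveMap_bijective_iff (A B : Matrix ι ι ℝ) (S : Finset ι) :
    Function.Bijective (gaveMap A B S) ↔ ∀ d ∈ cubeOn S, IsUnit (A + B * diagonal d) :=
  ⟨fun hbij _ hd => isUnit_of_gaveMap_injective hbij.1 hd,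
    fun h => ⟨gaveMap_injective h, gaveMap_surjective h⟩⟩

theorem stmt6 {n : ℕ} (A B : Matrix (Fin n) (Fin n) ℝ) :
    (∀ b : Fin n → ℝ, ∃! x : Fin n → ℝ, A *ᵥ x + B *ᵥ |x| = b) ↔
      ∀ d : Fin n → ℝ, (∀ i, d i ∈ Set.Icc (-1 : ℝ) 1) →
        IsUnit (A + B * Matrix.diagonal d) := by
  rw [← Function.bijective_iff_existsUnique, ← gaveMap_univ, gaveMap_bijective_iff]
  simp only [mem_cubeOn_univ]
end
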